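/- arXiv:1702.00969 — 2 statements merged into one kernel-verified Lean document; each statement's English description precedes it below -/
import Mathlib

section
/- Non-axisymmetric case of the main lemma: Let s = ±2, ω ∈ ℝ, and m ∈ ℤ with m ≠ 0, and let ψ(r,z) be a smooth complex-valued function on {r > r₊, −1 ≤ z ≤ 1} such that Φ(t,r,z,φ) := ψ(r,z)·e^{i(mφ−ωt)} solves the homogeneous spin-s Teukolsky equation on the Kerr exterior. Then Q[h^{CCK}[s,Φ], x∂_t + y∂_φ, S_{t,r}] = 0 for all x, y ∈ ℝ, all t ∈ ℝ and all r > r₊. -/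
noncomputable section

open ComplexConjugate Filter

namespace Kerr

/-- A point of the Boyer-Lindquist-type coordinate chart `(t, r, z, φ)`. -/
abbrev Pt := Fin 4 → ℝ

/-- Partial derivative of a real-valued function on the chart. -/
def pd (i : Fin 4) (f : Pt → ℝ) (p : Pt) : ℝ :=
  fderiv ℝ f p (Pi.single i 1)

/-- Partial derivative of a complex-valued function on the chart. -/
def pdC (i : Fin 4) (f : Pt → ℂ) (p : Pt) : ℂ :=
  fderiv ℝ f p (Pi.single i 1)

/-- `Δ := r(r−2M)+a²` for the Kerr black hole with `M = 1`. -/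
def Del (a r : ℝ) : ℝ := r * (r - 2) + a ^ 2

/-- `Σ := r² + a²z²`. -/
def Sig (a r z : ℝ) : ℝ := r ^ 2 + a ^ 2 * z ^ 2

/-- Outer horizon radius `r₊ = 1 + √(1−a²)` (with `M = 1`). -/
def rplus (a : ℝ) : ℝ := 1 + Real.sqrt (1 - a ^ 2)

/-- Inner horizon radius `r₋ = 1 − √(1−a²)` (with `M = 1`). -/
def rminus (a : ℝ) : ℝ := 1 - Real.sqrt (1 - a ^ 2)

/-- The Kerr family of metrics, parametrized by mass `M` and angular momentum `J` (`a = J/M`),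
in Boyer-Lindquist-type coordinates `(t,r,z,φ)`. -/
def gFam (M J : ℝ) (p : Pt) : Matrix (Fin 4) (Fin 4) ℝ :=
  Matrix.of
    ![![-(1 - 2 * M * p 1 / (p 1 ^ 2 + (J / M) ^ 2 * p 2 ^ 2)), 0, 0,
        -(2 * M * (J / M) * p 1 * (1 - p 2 ^ 2) / (p 1 ^ 2 + (J / M) ^ 2 * p 2 ^ 2))],
      ![0, (p 1 ^ 2 + (J / M) ^ 2 * p 2 ^ 2) / (p 1 ^ 2 - 2 * M * p 1 + (J / M) ^ 2), 0, 0],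
      ![0, 0, (p 1 ^ 2 + (J / M) ^ 2 * p 2 ^ 2) / (1 - p 2 ^ 2), 0],
      ![-(2 * M * (J / M) * p 1 * (1 - p 2 ^ 2) / (p 1 ^ 2 + (J / M) ^ 2 * p 2 ^ 2)), 0, 0,
        (1 - p 2 ^ 2) / (p 1 ^ 2 + (J / M) ^ 2 * p 2 ^ 2) *
          (2 * (J / M) ^ 2 * M * p 1 * (1 - p 2 ^ 2)
            + ((J / M) ^ 2 + p 1 ^ 2) * (p 1 ^ 2 + (J / M) ^ 2 * p 2 ^ 2))]]

/-- The background Kerr metric with `M = 1` and spin `a`. -/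
def g (a : ℝ) : Pt → Matrix (Fin 4) (Fin 4) ℝ := gFam 1 a

/-- Inverse Kerr metric. -/
def gInv (a : ℝ) (p : Pt) : Matrix (Fin 4) (Fin 4) ℝ := (g a p)⁻¹

/-- Christoffel symbols `Γ^l_{m n}` of the Kerr metric. -/
def Chr (a : ℝ) (l m n : Fin 4) (p : Pt) : ℝ :=
  (1 / 2) * ∑ s : Fin 4, gInv a p l s *
    (pd m (fun q => g a q s n) p + pd n (fun q => g a q s m) p - pd s (fun q => g a q m n) p)

/-- Covariant derivative `(∇_c h)_{α β}` of a covariant 2-tensor field. -/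
def covD2 (a : ℝ) (h : Pt → Matrix (Fin 4) (Fin 4) ℝ) (c α β : Fin 4) (p : Pt) : ℝ :=
  pd c (fun q => h q α β) p
    - ∑ s : Fin 4, Chr a s c α p * h p s β
    - ∑ s : Fin 4, Chr a s c β p * h p α s

/-- Covariant derivative `(∇_c T)_{α β γ}` of a covariant 3-tensor field. -/
def covD3 (a : ℝ) (T : Fin 4 → Fin 4 → Fin 4 → Pt → ℝ) (c α β γ : Fin 4) (p : Pt) : ℝ :=
  pd c (fun q => T α β γ q) p
    - ∑ s : Fin 4, Chr a s c α p * T s β γ p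
    - ∑ s : Fin 4, Chr a s c β p * T α s γ p
    - ∑ s : Fin 4, Chr a s c γ p * T α β s p

/-- The Killing vector `k = x ∂_t + y ∂_φ` of the Kerr background. -/
def kvec (x y : ℝ) : Fin 4 → ℝ := ![x, 0, 0, y]

/-- The lowered Killing covector `k_α`. -/
def kco (a x y : ℝ) (p : Pt) (α : Fin 4) : ℝ := ∑ s : Fin 4, g a p α s * kvec x y s

/-- `∇_β k^λ` for the Killing vector `k = x ∂_t + y ∂_φ`. -/
def covDk (a x y : ℝ) (β l : Fin 4) (p : Pt) : ℝ :=
  pd β (fun _ => kvec x y l) p + ∑ s : Fin 4, Chr a l β s p * kvec x y s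

/-- Trace-reversed metric perturbation `h̄_{αβ} = h_{αβ} − ½ g_{αβ} g^{λσ} h_{λσ}`. -/
def trRev (a : ℝ) (h : Pt → Matrix (Fin 4) (Fin 4) ℝ) (p : Pt) : Matrix (Fin 4) (Fin 4) ℝ :=
  Matrix.of fun α β =>
    h p α β - (1 / 2) * g a p α β * ∑ l : Fin 4, ∑ s : Fin 4, gInv a p l s * h p l s

/-- Abbott–Deser 2-form `F_{αβ}[h, k]` (lowered indices) for the Killing vector
`k = x ∂_t + y ∂_φ`. -/
def ADform (a : ℝ) (h : Pt → Matrix (Fin 4) (Fin 4) ℝ) (x y : ℝ) (α β : Fin 4) (p : Pt) : ℝ :=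
  (1 / (8 * Real.pi)) *
    ((1 / 2) * (∑ l : Fin 4, kvec x y l *
        (covD2 a (trRev a h) α β l p - covD2 a (trRev a h) β α l p))
    + (1 / 2) * (∑ l : Fin 4,
        (trRev a h p l α * covDk a x y β l p - trRev a h p l β * covDk a x y α l p))
    - (1 / 2) *
        (kco a x y p α * ∑ l : Fin 4, ∑ s : Fin 4, gInv a p l s * covD2 a (trRev a h) s β l p
        - kco a x y p β * ∑ l : Fin 4, ∑ s : Fin 4, gInv a p l s * covD2 a (trRev a h) s α l p))

/-- Abbott–Deser 2-form with raised indices, `F^{αβ}[h,k]`. -/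
def ADformUp (a : ℝ) (h : Pt → Matrix (Fin 4) (Fin 4) ℝ) (x y : ℝ) (α β : Fin 4) (p : Pt) : ℝ :=
  ∑ m : Fin 4, ∑ n : Fin 4, gInv a p α m * gInv a p β n * ADform a h x y m n p

/-- The Abbott–Deser charge density `ℱ[k] := Σ F^{rt}[h,k]`. -/
def Fdens (a : ℝ) (h : Pt → Matrix (Fin 4) (Fin 4) ℝ) (x y : ℝ) (p : Pt) : ℝ :=
  Sig a (p 1) (p 2) * ADformUp a h x y 1 0 p

/-- The Abbott–Deser charge `Q[h, x∂_t + y∂_φ, S_{t,r}] = ∫₀^{2π}∫_{−1}^1 Σ F^{rt} dz dφ`. -/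
def ADcharge (a : ℝ) (h : Pt → Matrix (Fin 4) (Fin 4) ℝ) (x y t r : ℝ) : ℝ :=
  ∫ φ in (0:ℝ)..(2 * Real.pi), ∫ z in (-1:ℝ)..(1:ℝ),
    Sig a r z * ADformUp a h x y 1 0 ![t, r, z, φ]

/-! ### The Kinnersley tetrad and Newman-Penrose quantities -/

/-- The Newman–Penrose coefficient `ρ = −1/(r − i a z)`. -/
def rhoC (a : ℝ) (p : Pt) : ℂ := -1 / ((p 1 : ℂ) - Complex.I * (a : ℂ) * (p 2 : ℂ))

/-- Kinnersley tetrad leg `l^μ`. -/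
def lvec (a : ℝ) (p : Pt) : Fin 4 → ℂ := fun i =>
  ((![(p 1 ^ 2 + a ^ 2) / Del a (p 1), 1, 0, a / Del a (p 1)] : Fin 4 → ℝ) i : ℂ)

/-- Kinnersley tetrad leg `n^μ`. -/
def nvec (a : ℝ) (p : Pt) : Fin 4 → ℂ := fun i =>
  ((![(p 1 ^ 2 + a ^ 2) / (2 * Sig a (p 1) (p 2)), -Del a (p 1) / (2 * Sig a (p 1) (p 2)), 0,
      a / (2 * Sig a (p 1) (p 2))] : Fin 4 → ℝ) i : ℂ)

/-- Kinnersley tetrad leg `m^μ`. -/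
def mvec (a : ℝ) (p : Pt) : Fin 4 → ℂ := fun i =>
  (-(conj (rhoC a p)) * (Real.sqrt (1 - p 2 ^ 2) : ℂ) / (Real.sqrt 2 : ℂ)) *
    (![Complex.I * (a : ℂ), 0, -1, Complex.I / (1 - (p 2 : ℂ) ^ 2)] i)

/-- Kinnersley tetrad leg `m̄^μ`. -/
def mbvec (a : ℝ) (p : Pt) : Fin 4 → ℂ := fun i => conj (mvec a p i)

/-- Lowered tetrad covector `l_μ`. -/
def lco (a : ℝ) (p : Pt) (i : Fin 4) : ℂ := ∑ j : Fin 4, (g a p i j : ℂ) * lvec a p j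

/-- Lowered tetrad covector `n_μ`. -/
def nco (a : ℝ) (p : Pt) (i : Fin 4) : ℂ := ∑ j : Fin 4, (g a p i j : ℂ) * nvec a p j

/-- Lowered tetrad covector `m_μ`. -/
def mco (a : ℝ) (p : Pt) (i : Fin 4) : ℂ := ∑ j : Fin 4, (g a p i j : ℂ) * mvec a p j

/-- Lowered tetrad covector `m̄_μ`. -/
def mbco (a : ℝ) (p : Pt) (i : Fin 4) : ℂ := ∑ j : Fin 4, (g a p i j : ℂ) * mbvec a p j

/-- Newman–Penrose spin coefficient `μ = ρ²ρ̄Δ/2`. -/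
def muNP (a : ℝ) (p : Pt) : ℂ := rhoC a p ^ 2 * conj (rhoC a p) * (Del a (p 1) : ℂ) / 2

/-- Newman–Penrose spin coefficient `τ = −iaρρ̄√(1−z²)/√2`. -/
def tauNP (a : ℝ) (p : Pt) : ℂ :=
  -Complex.I * (a : ℂ) * rhoC a p * conj (rhoC a p) * (Real.sqrt (1 - p 2 ^ 2) : ℂ)
    / (Real.sqrt 2 : ℂ)

/-- Newman–Penrose spin coefficient `π = iaρ²√(1−z²)/√2`. -/
def piNP (a : ℝ) (p : Pt) : ℂ :=
  Complex.I * (a : ℂ) * rhoC a p ^ 2 * (Real.sqrt (1 - p 2 ^ 2) : ℂ) / (Real.sqrt 2 : ℂ)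

/-- Newman–Penrose spin coefficient `γ = μ + ρρ̄(r−1)/2`. -/
def gamNP (a : ℝ) (p : Pt) : ℂ :=
  muNP a p + rhoC a p * conj (rhoC a p) * ((p 1 : ℂ) - 1) / 2

/-- Newman–Penrose spin coefficient `β = −ρ̄z/(2√2√(1−z²))`. -/
def betNP (a : ℝ) (p : Pt) : ℂ :=
  -(conj (rhoC a p)) * (p 2 : ℂ) / (2 * (Real.sqrt 2 : ℂ) * (Real.sqrt (1 - p 2 ^ 2) : ℂ))

/-- Newman–Penrose spin coefficient `α = π − β̄`. -/
def alpNP (a : ℝ) (p : Pt) : ℂ := piNP a p - conj (betNP a p)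

/-- Directional derivative along a (complex) vector field. -/
def dirD (v : Pt → Fin 4 → ℂ) (f : Pt → ℂ) (p : Pt) : ℂ := ∑ i : Fin 4, v p i * pdC i f p

/-- First-order operator `(v^μ ∂_μ + c)` acting on complex scalars. -/
def opD (v : Pt → Fin 4 → ℂ) (c : Pt → ℂ) (f : Pt → ℂ) : Pt → ℂ :=
  fun p => dirD v f p + c p * f p

/-- The CCK operator `₊₂Ĥ_{μν}` applied to a Hertz potential `Φ`. -/
def Hplus (a : ℝ) (Φ : Pt → ℂ) (p : Pt) (i j : Fin 4) : ℂ :=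
  -(rhoC a p) ^ (-4 : ℤ) *
    (lco a p i * lco a p j *
        opD (mbvec a) (fun q => -3 * alpNP a q - conj (betNP a q) + 5 * piNP a q)
          (opD (mbvec a) (fun q => -4 * alpNP a q + piNP a q) Φ) p
    + mco a p i * mco a p j *
        opD (nvec a) (fun q => 5 * muNP a q - 3 * gamNP a q + conj (gamNP a q))
          (opD (nvec a) (fun q => muNP a q - 4 * gamNP a q) Φ) p
    - (1 / 2) * (lco a p i * mco a p j + lco a p j * mco a p i) *
        (opD (mbvec a)
            (fun q => -3 * alpNP a q + conj (betNP a q) + 5 * piNP a q + conj (tauNP a q))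
            (opD (nvec a) (fun q => muNP a q - 4 * gamNP a q) Φ) p
        + opD (nvec a)
            (fun q => 5 * muNP a q - conj (muNP a q) - 3 * gamNP a q - conj (gamNP a q))
            (opD (mbvec a) (fun q => -4 * alpNP a q + piNP a q) Φ) p))

/-- The CCK operator `₋₂Ĥ_{μν}` applied to a Hertz potential `Φ`. -/
def Hminus (a : ℝ) (Φ : Pt → ℂ) (p : Pt) (i j : Fin 4) : ℂ :=
  -(nco a p i * nco a p j *
        opD (mvec a) (fun q => conj (alpNP a q) + 3 * betNP a q - tauNP a q)
          (opD (mvec a) (fun q => 4 * betNP a q + 3 * tauNP a q) Φ) p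
    + mbco a p i * mbco a p j *
        opD (lvec a) (fun q => -(rhoC a q))
          (opD (lvec a) (fun q => 3 * rhoC a q) Φ) p
    - (1 / 2) * (nco a p i * mbco a p j + nco a p j * mbco a p i) *
        (opD (mvec a) (fun q => -2 * conj (alpNP a q) + 2 * betNP a q - tauNP a q)
            (opD (lvec a) (fun q => 3 * rhoC a q) Φ) p
        + opD (lvec a) (fun q => conj (rhoC a q) - rhoC a q)
            (opD (mvec a) (fun q => 4 * betNP a q + 3 * tauNP a q) Φ) p))

/-- `ₛĤ_{μν} Φ` for `s = ±2`. -/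
def Hop (a : ℝ) (s : ℤ) (Φ : Pt → ℂ) (p : Pt) (i j : Fin 4) : ℂ :=
  if s = 2 then Hplus a Φ p i j else Hminus a Φ p i j

/-- The CCK metric perturbation `h^{CCK}[s,Φ]_{μν} := ₛĤ_{μν}Φ + c.c.`. -/
def hCCK (a : ℝ) (s : ℤ) (Φ : Pt → ℂ) (p : Pt) : Matrix (Fin 4) (Fin 4) ℝ :=
  Matrix.of fun i j => (Hop a s Φ p i j + conj (Hop a s Φ p i j)).re

/-- The homogeneous spin-`s` Teukolsky operator on the Kerr exterior. -/
def Teuk (a : ℝ) (s : ℤ) (Φ : Pt → ℂ) (p : Pt) : ℂ :=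
  -((((p 1 : ℂ) ^ 2 + (a : ℂ) ^ 2) ^ 2 / (Del a (p 1) : ℂ)
      - (a : ℂ) ^ 2 * (1 - (p 2 : ℂ) ^ 2)) * pdC 0 (pdC 0 Φ) p)
  - (4 * (a : ℂ) * (p 1 : ℂ) / (Del a (p 1) : ℂ)) * pdC 0 (pdC 3 Φ) p
  - ((a : ℂ) ^ 2 / (Del a (p 1) : ℂ) - 1 / (1 - (p 2 : ℂ) ^ 2)) * pdC 3 (pdC 3 Φ) p
  + 2 * (s : ℂ) * (((p 1 : ℂ) ^ 2 - (a : ℂ) ^ 2) / (Del a (p 1) : ℂ) - (p 1 : ℂ)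
      - Complex.I * (a : ℂ) * (p 2 : ℂ)) * pdC 0 Φ p
  + 2 * (s : ℂ) * ((a : ℂ) * ((p 1 : ℂ) - 1) / (Del a (p 1) : ℂ)
      + Complex.I * (p 2 : ℂ) / (1 - (p 2 : ℂ) ^ 2)) * pdC 3 Φ p
  + (Del a (p 1) : ℂ) ^ (-s) *
      pdC 1 (fun q => (Del a (q 1) : ℂ) ^ (s + 1) * pdC 1 Φ q) p
  + pdC 2 (fun q => (1 - (q 2 : ℂ) ^ 2) * pdC 2 Φ q) p
  - (((s : ℂ) * ((s : ℂ) + 1) * (p 2 : ℂ) ^ 2 - (s : ℂ)) / (1 - (p 2 : ℂ) ^ 2)) * Φ p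

/-- The exterior Kerr coordinate patch `{r > r₊, −1 < z < 1}`. -/
def ext (a : ℝ) : Set Pt := {p | rplus a < p 1 ∧ -1 < p 2 ∧ p 2 < 1}

/-- The closed exterior patch `{r > r₊, −1 ≤ z ≤ 1}`. -/
def extCl (a : ℝ) : Set Pt := {p | rplus a < p 1 ∧ -1 ≤ p 2 ∧ p 2 ≤ 1}

/-- A Fourier mode Hertz potential `Φ(t,r,z,φ) = ψ(r,z) e^{i(mφ − ωt)}`. -/
def fourierMode (m : ℤ) (ω : ℝ) (ψ : ℝ → ℝ → ℂ) : Pt → ℂ :=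
  fun p => ψ (p 1) (p 2) * Complex.exp (Complex.I * ((m : ℂ) * (p 3 : ℂ) - (ω : ℂ) * (p 0 : ℂ)))

/-- The 2D domain `U = {(r,z) : r > r₊, −1 < z < 1}`. -/
def U2 (a : ℝ) : Set (ℝ × ℝ) := {q | rplus a < q.1 ∧ -1 < q.2 ∧ q.2 < 1}

/-- The closed 2D domain `{(r,z) : r > r₊, −1 ≤ z ≤ 1}`. -/
def U2cl (a : ℝ) : Set (ℝ × ℝ) := {q | rplus a < q.1 ∧ -1 ≤ q.2 ∧ q.2 ≤ 1}

/-- `∂_r` of a function of `(r, z)`. -/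
def pdr2 (f : ℝ → ℝ → ℂ) : ℝ → ℝ → ℂ := fun r z => deriv (fun r' => f r' z) r

/-- `∂_z` of a function of `(r, z)`. -/
def pdz2 (f : ℝ → ℝ → ℂ) : ℝ → ℝ → ℂ := fun r z => deriv (fun z' => f r z') z

/-- The stationary axisymmetric spin-`s` Teukolsky operator
`𝒯_s Φ := Δ^{−s}∂_r(Δ^{s+1}∂_rΦ) + ∂_z((1−z²)∂_zΦ) − ((s(s+1)z²−s)/(1−z²))Φ`. -/
def TeukSAS (a : ℝ) (s : ℤ) (ψ : ℝ → ℝ → ℂ) (r z : ℝ) : ℂ :=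
  (Del a r : ℂ) ^ (-s) *
      deriv (fun r' => (Del a r' : ℂ) ^ (s + 1) * deriv (fun r'' => ψ r'' z) r') r
    + deriv (fun z' => ((1 - z' ^ 2 : ℝ) : ℂ) * deriv (fun z'' => ψ r z'') z') z
    - (((s : ℂ) * ((s : ℂ) + 1) * (z : ℂ) ^ 2 - (s : ℂ)) / (1 - (z : ℂ) ^ 2)) * ψ r z


/-- The mass perturbation `h_M := ∂g^{Kerr}/∂M` at `M = 1`, `J = a`. -/
def hM (a : ℝ) (p : Pt) : Matrix (Fin 4) (Fin 4) ℝ :=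
  Matrix.of fun i j => deriv (fun M => gFam M a p i j) 1

/-- The angular-momentum perturbation `h_J := ∂g^{Kerr}/∂J` at `M = 1`, `J = a`. -/
def hJ (a : ℝ) (p : Pt) : Matrix (Fin 4) (Fin 4) ℝ :=
  Matrix.of fun i j => deriv (fun J => gFam 1 J p i j) a

/-- The eight-parameter family `Φ_Ker(c)` of stationary axisymmetric kernel elements
(`c 0, ..., c 7` correspond to `c₁, ..., c₈`). -/
def PhiKer (a : ℝ) (c : Fin 8 → ℂ) (r z : ℝ) : ℂ :=
  (1 - (z : ℂ) ^ 2)⁻¹ *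
    (c 0
    + c 1 * ((r : ℂ) - 1) * (z : ℂ)
    + c 2 * (z : ℂ) * ((z : ℂ) ^ 2 - 3)
    + c 3 * ((r : ℂ) + ((r : ℂ) - 1) * (z : ℂ) ^ 2)
    + c 4 * ((r : ℂ) ^ 2 - (a : ℂ) ^ 2) * (z : ℂ)
    + c 5 * (r : ℂ) * ((r : ℂ) * ((r : ℂ) - 3) + 3 * (a : ℂ) ^ 2)
    + c 6 * ((r : ℂ) ^ 2 + ((r : ℂ) ^ 2 - (a : ℂ) ^ 2) * (z : ℂ) ^ 2)
    + c 7 * (r : ℂ) * (z : ℂ) *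
        (((r : ℂ) * ((r : ℂ) - 3) + 3 * (a : ℂ) ^ 2) * (z : ℂ) ^ 2
          - 3 * ((r : ℂ) * ((r : ℂ) + 4) - 4 * (a : ℂ) ^ 2)))

/-- `G(z) = −4(1−a²)r₊z(1−z²)/(2z² + r₊(1−z²))²`. -/
def Gfun (a z : ℝ) : ℝ :=
  -4 * (1 - a ^ 2) * rplus a * z * (1 - z ^ 2) / (2 * z ^ 2 + rplus a * (1 - z ^ 2)) ^ 2

/-- Outward Abbott–Deser flux through the closed surface `C_ε⁺` around the segment
`r₁ ≤ r ≤ r₂` of the axis `z = 1`, in the slice `t = t₀`: two caps at `r = r₁, r₂`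
and the tube at `z = 1 − ε`. -/
def axisFluxP (a : ℝ) (h : Pt → Matrix (Fin 4) (Fin 4) ℝ) (x y t r₁ r₂ ε : ℝ) : ℝ :=
  (∫ φ in (0:ℝ)..(2 * Real.pi), ∫ z in (1 - ε)..(1:ℝ),
      Sig a r₂ z * ADformUp a h x y 1 0 ![t, r₂, z, φ])
  - (∫ φ in (0:ℝ)..(2 * Real.pi), ∫ z in (1 - ε)..(1:ℝ),
      Sig a r₁ z * ADformUp a h x y 1 0 ![t, r₁, z, φ])
  - (∫ φ in (0:ℝ)..(2 * Real.pi), ∫ r in r₁..r₂,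
      Sig a r (1 - ε) * ADformUp a h x y 2 0 ![t, r, 1 - ε, φ])

/-- Outward Abbott–Deser flux through the closed surface `C_ε⁻` around the segment
`r₁ ≤ r ≤ r₂` of the axis `z = −1`. -/
def axisFluxM (a : ℝ) (h : Pt → Matrix (Fin 4) (Fin 4) ℝ) (x y t r₁ r₂ ε : ℝ) : ℝ :=
  (∫ φ in (0:ℝ)..(2 * Real.pi), ∫ z in (-1:ℝ)..(-1 + ε),
      Sig a r₂ z * ADformUp a h x y 1 0 ![t, r₂, z, φ])
  - (∫ φ in (0:ℝ)..(2 * Real.pi), ∫ z in (-1:ℝ)..(-1 + ε),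
      Sig a r₁ z * ADformUp a h x y 1 0 ![t, r₁, z, φ])
  + (∫ φ in (0:ℝ)..(2 * Real.pi), ∫ r in r₁..r₂,
      Sig a r (-1 + ε) * ADformUp a h x y 2 0 ![t, r, -1 + ε, φ])

/-- The statement that both limiting Abbott–Deser axis charges
`Q_axis^± [h, x∂_t + y∂_φ, r₁, r₂]` vanish. -/
def axisChargesVanish (a : ℝ) (h : Pt → Matrix (Fin 4) (Fin 4) ℝ) : Prop :=
  ∀ x y t r₁ r₂ : ℝ, rplus a < r₁ → r₁ < r₂ →
    Tendsto (fun ε => axisFluxP a h x y t r₁ r₂ ε) (nhdsWithin 0 (Set.Ioi 0)) (nhds 0) ∧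
    Tendsto (fun ε => axisFluxM a h x y t r₁ r₂ ε) (nhdsWithin 0 (Set.Ioi 0)) (nhds 0)

/-- Covariant Hessian `∇_α ∇_β f` of a scalar field. -/
def hess (a : ℝ) (f : Pt → ℝ) (α β : Fin 4) (p : Pt) : ℝ :=
  pd α (fun q => pd β f q) p - ∑ s : Fin 4, Chr a s α β p * pd s f p

/-- The linearized Ricci tensor
`δR_{αβ}[h] = −½∇^λ∇_λ h_{αβ} − ½∇_α∇_β(g^{λσ}h_{λσ}) + ∇^λ∇_{(α}h_{β)λ}`. -/
def linRicci (a : ℝ) (h : Pt → Matrix (Fin 4) (Fin 4) ℝ) (α β : Fin 4) (p : Pt) : ℝ :=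
  -(1 / 2) * (∑ l : Fin 4, ∑ s : Fin 4, gInv a p l s * covD3 a (covD2 a h) l s α β p)
  - (1 / 2) * hess a (fun q => ∑ l : Fin 4, ∑ s : Fin 4, gInv a q l s * h q l s) α β p
  + (1 / 2) * ((∑ l : Fin 4, ∑ s : Fin 4, gInv a p l s * covD3 a (covD2 a h) s α β l p)
      + (∑ l : Fin 4, ∑ s : Fin 4, gInv a p l s * covD3 a (covD2 a h) s β α l p))


/-! ### Auxiliary lemmas for the non-axisymmetric main lemma -/

section ShiftLemmas

lemma fderiv_shift {E : Type*} [NormedAddCommGroup E] [NormedSpace ℝ E]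
    (f : Pt → E) (p w : Pt) :
    fderiv ℝ (fun q => f (q + w)) p = fderiv ℝ f (p + w) := by
  by_cases hd : DifferentiableAt ℝ f (p + w)
  · have h1 : HasFDerivAt (fun q : Pt => q + w) (ContinuousLinearMap.id ℝ Pt) p := by
      simpa using (hasFDerivAt_id (𝕜 := ℝ) p).add_const w
    have h2 := hd.hasFDerivAt.comp p h1
    simpa [Function.comp_def] using h2.fderiv
  · have hd2 : ¬ DifferentiableAt ℝ (fun q => f (q + w)) p := by
      intro hg
      apply hd
      have h1 : DifferentiableAt ℝ (fun q : Pt => q + (-w)) (p + w) :=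
        (differentiable_id.add_const (-w)).differentiableAt
      have h2 : DifferentiableAt ℝ ((fun q => f (q + w)) ∘ fun q : Pt => q + (-w)) (p + w) := by
        apply DifferentiableAt.comp
        · simpa using hg
        · exact h1
      have h3 : ((fun q => f (q + w)) ∘ fun q : Pt => q + (-w)) = f := by
        funext q; simp [Function.comp_def]
      rwa [h3] at h2
    rw [fderiv_zero_of_not_differentiableAt hd, fderiv_zero_of_not_differentiableAt hd2]

lemma pd_shift (i : Fin 4) (f : Pt → ℝ) (p w : Pt) :
    pd i f (p + w) = pd i (fun q => f (q + w)) p := by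
  unfold pd; rw [fderiv_shift]

lemma pdC_shift (i : Fin 4) (f : Pt → ℂ) (p w : Pt) :
    pdC i f (p + w) = pdC i (fun q => f (q + w)) p := by
  unfold pdC; rw [fderiv_shift]

lemma pd_neg (i : Fin 4) (f : Pt → ℝ) (p : Pt) :
    pd i (fun q => -f q) p = -pd i f p := by
  unfold pd; rw [fderiv_fun_neg]; simp

lemma pdC_neg (i : Fin 4) (f : Pt → ℂ) (p : Pt) :
    pdC i (fun q => -f q) p = -pdC i f p := by
  unfold pdC; rw [fderiv_fun_neg]; simp

lemma pd_const (i : Fin 4) (r : ℝ) (p : Pt) : pd i (fun _ => r) p = 0 := by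
  simp [pd]

lemma pd_eps {ε : ℝ} (hε : ε = 1 ∨ ε = -1) (i : Fin 4) (f : Pt → ℝ) (p : Pt) :
    pd i (fun q => ε * f q) p = ε * pd i f p := by
  rcases hε with h | h <;> subst h
  · simp
  · simp only [neg_one_mul]; rw [pd_neg]

lemma pdC_eps {ε : ℝ} (hε : ε = 1 ∨ ε = -1) (i : Fin 4) (f : Pt → ℂ) (p : Pt) :
    pdC i (fun q => (ε : ℂ) * f q) p = (ε : ℂ) * pdC i f p := by
  rcases hε with h | h <;> subst h
  · simp
  · push_cast
    simp only [neg_one_mul]; rw [pdC_neg]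

lemma pd_shift_eps {ε : ℝ} (hε : ε = 1 ∨ ε = -1) (i : Fin 4) (f : Pt → ℝ) (w : Pt)
    (hf : ∀ q, f (q + w) = ε * f q) (p : Pt) :
    pd i f (p + w) = ε * pd i f p := by
  rw [pd_shift, show (fun q => f (q + w)) = fun q => ε * f q from funext hf, pd_eps hε]

lemma pdC_shift_eps {ε : ℝ} (hε : ε = 1 ∨ ε = -1) (i : Fin 4) (f : Pt → ℂ) (w : Pt)
    (hf : ∀ q, f (q + w) = (ε : ℂ) * f q) (p : Pt) :
    pdC i f (p + w) = (ε : ℂ) * pdC i f p := by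
  rw [pdC_shift, show (fun q => f (q + w)) = fun q => (ε : ℂ) * f q from funext hf, pdC_eps hε]

variable (a c : ℝ)

lemma sh0 (p : Pt) : (p + (Pi.single (3 : Fin 4) c : Pt)) 0 = p 0 := by
  simp [Pi.single_apply]

lemma sh1 (p : Pt) : (p + (Pi.single (3 : Fin 4) c : Pt)) 1 = p 1 := by
  simp [Pi.single_apply]

lemma sh2 (p : Pt) : (p + (Pi.single (3 : Fin 4) c : Pt)) 2 = p 2 := by
  simp [Pi.single_apply]

lemma sh3 (p : Pt) : (p + (Pi.single (3 : Fin 4) c : Pt)) 3 = p 3 + c := by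
  simp [Pi.single_apply]

lemma g_shift (p : Pt) : g a (p + Pi.single 3 c) = g a p := by
  simp only [g, gFam, sh1, sh2]

lemma gInv_shift (p : Pt) : gInv a (p + Pi.single 3 c) = gInv a p := by
  unfold gInv; rw [g_shift]

lemma pd_g_shift (i j k : Fin 4) (p : Pt) :
    pd i (fun q => g a q j k) (p + Pi.single 3 c) = pd i (fun q => g a q j k) p := by
  rw [pd_shift]
  congr 1
  funext q
  rw [g_shift]

lemma Chr_shift (l m n : Fin 4) (p : Pt) :
    Chr a l m n (p + Pi.single 3 c) = Chr a l m n p := by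
  simp only [Chr, gInv_shift, pd_g_shift]

lemma rhoC_shift (p : Pt) : rhoC a (p + Pi.single 3 c) = rhoC a p := by
  simp only [rhoC, sh1, sh2]

lemma lvec_shift (p : Pt) : lvec a (p + Pi.single 3 c) = lvec a p := by
  funext i; simp only [lvec, sh1]

lemma nvec_shift (p : Pt) : nvec a (p + Pi.single 3 c) = nvec a p := by
  funext i; simp only [nvec, sh1, sh2]

lemma mvec_shift (p : Pt) : mvec a (p + Pi.single 3 c) = mvec a p := by
  funext i; simp only [mvec, rhoC_shift, sh2]

lemma mbvec_shift (p : Pt) : mbvec a (p + Pi.single 3 c) = mbvec a p := by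
  funext i; simp only [mbvec, mvec_shift]

lemma lco_shift (p : Pt) (i : Fin 4) : lco a (p + Pi.single 3 c) i = lco a p i := by
  simp only [lco, g_shift, lvec_shift]

lemma nco_shift (p : Pt) (i : Fin 4) : nco a (p + Pi.single 3 c) i = nco a p i := by
  simp only [nco, g_shift, nvec_shift]

lemma mco_shift (p : Pt) (i : Fin 4) : mco a (p + Pi.single 3 c) i = mco a p i := by
  simp only [mco, g_shift, mvec_shift]

lemma mbco_shift (p : Pt) (i : Fin 4) : mbco a (p + Pi.single 3 c) i = mbco a p i := by
  simp only [mbco, g_shift, mbvec_shift]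

lemma muNP_shift (p : Pt) : muNP a (p + Pi.single 3 c) = muNP a p := by
  simp only [muNP, rhoC_shift, sh1]

lemma tauNP_shift (p : Pt) : tauNP a (p + Pi.single 3 c) = tauNP a p := by
  simp only [tauNP, rhoC_shift, sh2]

lemma piNP_shift (p : Pt) : piNP a (p + Pi.single 3 c) = piNP a p := by
  simp only [piNP, rhoC_shift, sh2]

lemma gamNP_shift (p : Pt) : gamNP a (p + Pi.single 3 c) = gamNP a p := by
  simp only [gamNP, muNP_shift, rhoC_shift, sh1]

lemma betNP_shift (p : Pt) : betNP a (p + Pi.single 3 c) = betNP a p := by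
  simp only [betNP, rhoC_shift, sh2]

lemma alpNP_shift (p : Pt) : alpNP a (p + Pi.single 3 c) = alpNP a p := by
  simp only [alpNP, piNP_shift, betNP_shift]

lemma opD_shift_eps {ε : ℝ} (hε : ε = 1 ∨ ε = -1) (vv : Pt → Fin 4 → ℂ) (cc : Pt → ℂ)
    (hvv : ∀ p, vv (p + Pi.single 3 c) = vv p)
    (hcc : ∀ p, cc (p + Pi.single 3 c) = cc p)
    (f : Pt → ℂ) (hf : ∀ q, f (q + Pi.single 3 c) = (ε : ℂ) * f q) (p : Pt) :
    opD vv cc f (p + Pi.single 3 c) = (ε : ℂ) * opD vv cc f p := by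
  have hp : ∀ i, pdC i f (p + Pi.single 3 c) = (ε : ℂ) * pdC i f p :=
    fun i => pdC_shift_eps hε i f _ hf p
  simp only [opD, dirD, hvv, hcc, hf, hp, Fin.sum_univ_four]
  ring

lemma Hplus_shift {ε : ℝ} (hε : ε = 1 ∨ ε = -1) (Φ : Pt → ℂ)
    (hΦ : ∀ q, Φ (q + Pi.single 3 c) = (ε : ℂ) * Φ q) (p : Pt) (i j : Fin 4) :
    Hplus a Φ (p + Pi.single 3 c) i j = (ε : ℂ) * Hplus a Φ p i j := by
  have hmb : ∀ p : Pt, mbvec a (p + Pi.single 3 c) = mbvec a p := mbvec_shift a c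
  have hnv : ∀ p : Pt, nvec a (p + Pi.single 3 c) = nvec a p := nvec_shift a c
  have hc1 : ∀ p : Pt,
      (fun q => -3 * alpNP a q - conj (betNP a q) + 5 * piNP a q) (p + Pi.single 3 c)
      = (fun q => -3 * alpNP a q - conj (betNP a q) + 5 * piNP a q) p := by
    intro p; simp only [alpNP_shift, betNP_shift, piNP_shift]
  have hc2 : ∀ p : Pt,
      (fun q => -4 * alpNP a q + piNP a q) (p + Pi.single 3 c)
      = (fun q => -4 * alpNP a q + piNP a q) p := by
    intro p; simp only [alpNP_shift, piNP_shift]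
  have hc3 : ∀ p : Pt,
      (fun q => 5 * muNP a q - 3 * gamNP a q + conj (gamNP a q)) (p + Pi.single 3 c)
      = (fun q => 5 * muNP a q - 3 * gamNP a q + conj (gamNP a q)) p := by
    intro p; simp only [muNP_shift, gamNP_shift]
  have hc4 : ∀ p : Pt,
      (fun q => muNP a q - 4 * gamNP a q) (p + Pi.single 3 c)
      = (fun q => muNP a q - 4 * gamNP a q) p := by
    intro p; simp only [muNP_shift, gamNP_shift]
  have hc5 : ∀ p : Pt,
      (fun q => -3 * alpNP a q + conj (betNP a q) + 5 * piNP a q + conj (tauNP a q))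
        (p + Pi.single 3 c)
      = (fun q => -3 * alpNP a q + conj (betNP a q) + 5 * piNP a q + conj (tauNP a q)) p := by
    intro p; simp only [alpNP_shift, betNP_shift, piNP_shift, tauNP_shift]
  have hc6 : ∀ p : Pt,
      (fun q => 5 * muNP a q - conj (muNP a q) - 3 * gamNP a q - conj (gamNP a q))
        (p + Pi.single 3 c)
      = (fun q => 5 * muNP a q - conj (muNP a q) - 3 * gamNP a q - conj (gamNP a q)) p := by
    intro p; simp only [muNP_shift, gamNP_shift]
  have k2 := opD_shift_eps c hε (mbvec a) (fun q => -4 * alpNP a q + piNP a q) hmb hc2 Φ hΦ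
  have k4 := opD_shift_eps c hε (nvec a) (fun q => muNP a q - 4 * gamNP a q) hnv hc4 Φ hΦ
  have T1 := opD_shift_eps c hε (mbvec a)
    (fun q => -3 * alpNP a q - conj (betNP a q) + 5 * piNP a q) hmb hc1 _ k2 p
  have T2 := opD_shift_eps c hε (nvec a)
    (fun q => 5 * muNP a q - 3 * gamNP a q + conj (gamNP a q)) hnv hc3 _ k4 p
  have T3 := opD_shift_eps c hε (mbvec a)
    (fun q => -3 * alpNP a q + conj (betNP a q) + 5 * piNP a q + conj (tauNP a q)) hmb hc5 _ k4 p
  have T4 := opD_shift_eps c hε (nvec a)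
    (fun q => 5 * muNP a q - conj (muNP a q) - 3 * gamNP a q - conj (gamNP a q)) hnv hc6 _ k2 p
  simp only [Hplus, rhoC_shift, lco_shift, mco_shift, T1, T2, T3, T4]
  ring

lemma Hminus_shift {ε : ℝ} (hε : ε = 1 ∨ ε = -1) (Φ : Pt → ℂ)
    (hΦ : ∀ q, Φ (q + Pi.single 3 c) = (ε : ℂ) * Φ q) (p : Pt) (i j : Fin 4) :
    Hminus a Φ (p + Pi.single 3 c) i j = (ε : ℂ) * Hminus a Φ p i j := by
  have hmv : ∀ p : Pt, mvec a (p + Pi.single 3 c) = mvec a p := mvec_shift a c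
  have hlv : ∀ p : Pt, lvec a (p + Pi.single 3 c) = lvec a p := lvec_shift a c
  have hc1 : ∀ p : Pt,
      (fun q => conj (alpNP a q) + 3 * betNP a q - tauNP a q) (p + Pi.single 3 c)
      = (fun q => conj (alpNP a q) + 3 * betNP a q - tauNP a q) p := by
    intro p; simp only [alpNP_shift, betNP_shift, tauNP_shift]
  have hc2 : ∀ p : Pt,
      (fun q => 4 * betNP a q + 3 * tauNP a q) (p + Pi.single 3 c)
      = (fun q => 4 * betNP a q + 3 * tauNP a q) p := by
    intro p; simp only [betNP_shift, tauNP_shift]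
  have hc3 : ∀ p : Pt,
      (fun q => -(rhoC a q)) (p + Pi.single 3 c) = (fun q => -(rhoC a q)) p := by
    intro p; simp only [rhoC_shift]
  have hc4 : ∀ p : Pt,
      (fun q => 3 * rhoC a q) (p + Pi.single 3 c) = (fun q => 3 * rhoC a q) p := by
    intro p; simp only [rhoC_shift]
  have hc5 : ∀ p : Pt,
      (fun q => -2 * conj (alpNP a q) + 2 * betNP a q - tauNP a q) (p + Pi.single 3 c)
      = (fun q => -2 * conj (alpNP a q) + 2 * betNP a q - tauNP a q) p := by
    intro p; simp only [alpNP_shift, betNP_shift, tauNP_shift]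
  have hc6 : ∀ p : Pt,
      (fun q => conj (rhoC a q) - rhoC a q) (p + Pi.single 3 c)
      = (fun q => conj (rhoC a q) - rhoC a q) p := by
    intro p; simp only [rhoC_shift]
  have k2 := opD_shift_eps c hε (mvec a) (fun q => 4 * betNP a q + 3 * tauNP a q) hmv hc2 Φ hΦ
  have k4 := opD_shift_eps c hε (lvec a) (fun q => 3 * rhoC a q) hlv hc4 Φ hΦ
  have T1 := opD_shift_eps c hε (mvec a)
    (fun q => conj (alpNP a q) + 3 * betNP a q - tauNP a q) hmv hc1 _ k2 p
  have T2 := opD_shift_eps c hε (lvec a) (fun q => -(rhoC a q)) hlv hc3 _ k4 p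
  have T3 := opD_shift_eps c hε (mvec a)
    (fun q => -2 * conj (alpNP a q) + 2 * betNP a q - tauNP a q) hmv hc5 _ k4 p
  have T4 := opD_shift_eps c hε (lvec a) (fun q => conj (rhoC a q) - rhoC a q) hlv hc6 _ k2 p
  simp only [Hminus, nco_shift, mbco_shift, T1, T2, T3, T4]
  ring

lemma Hop_shift (s : ℤ) {ε : ℝ} (hε : ε = 1 ∨ ε = -1) (Φ : Pt → ℂ)
    (hΦ : ∀ q, Φ (q + Pi.single 3 c) = (ε : ℂ) * Φ q) (p : Pt) (i j : Fin 4) :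
    Hop a s Φ (p + Pi.single 3 c) i j = (ε : ℂ) * Hop a s Φ p i j := by
  by_cases h2 : s = 2
  · simp only [Hop, if_pos h2]; exact Hplus_shift a c hε Φ hΦ p i j
  · simp only [Hop, if_neg h2]; exact Hminus_shift a c hε Φ hΦ p i j

lemma hCCK_shift (s : ℤ) {ε : ℝ} (hε : ε = 1 ∨ ε = -1) (Φ : Pt → ℂ)
    (hΦ : ∀ q, Φ (q + Pi.single 3 c) = (ε : ℂ) * Φ q) (q : Pt) (i j : Fin 4) :
    hCCK a s Φ (q + Pi.single 3 c) i j = ε * hCCK a s Φ q i j := by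
  simp only [hCCK, Matrix.of_apply, Hop_shift a c s hε Φ hΦ]
  rw [map_mul, Complex.conj_ofReal, ← mul_add, Complex.re_ofReal_mul]

lemma trRev_shift {ε : ℝ} (h : Pt → Matrix (Fin 4) (Fin 4) ℝ)
    (hh : ∀ q i j, h (q + Pi.single 3 c) i j = ε * h q i j) (q : Pt) (i j : Fin 4) :
    trRev a h (q + Pi.single 3 c) i j = ε * trRev a h q i j := by
  simp only [trRev, Matrix.of_apply, hh, g_shift, gInv_shift, Fin.sum_univ_four]
  ring

lemma covD2_shift {ε : ℝ} (hε : ε = 1 ∨ ε = -1) (H : Pt → Matrix (Fin 4) (Fin 4) ℝ)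
    (hH : ∀ q i j, H (q + Pi.single 3 c) i j = ε * H q i j) (c' α β : Fin 4) (p : Pt) :
    covD2 a H c' α β (p + Pi.single 3 c) = ε * covD2 a H c' α β p := by
  have hpd : pd c' (fun q => H q α β) (p + Pi.single 3 c) = ε * pd c' (fun q => H q α β) p :=
    pd_shift_eps hε c' _ _ (fun q => hH q α β) p
  simp only [covD2, hpd, hH, Chr_shift, Fin.sum_univ_four]
  ring

lemma ADform_shift {ε : ℝ} (hε : ε = 1 ∨ ε = -1) (h : Pt → Matrix (Fin 4) (Fin 4) ℝ)
    (hh : ∀ q i j, h (q + Pi.single 3 c) i j = ε * h q i j) (x y : ℝ) (α β : Fin 4) (p : Pt) :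
    ADform a h x y α β (p + Pi.single 3 c) = ε * ADform a h x y α β p := by
  have htr : ∀ (q : Pt) (i j : Fin 4),
      trRev a h (q + Pi.single 3 c) i j = ε * trRev a h q i j :=
    fun q i j => trRev_shift a c h hh q i j
  have hcd : ∀ (c' α' β' : Fin 4),
      covD2 a (trRev a h) c' α' β' (p + Pi.single 3 c)
        = ε * covD2 a (trRev a h) c' α' β' p :=
    fun c' α' β' => covD2_shift a c hε _ htr c' α' β' p
  have hk : ∀ α' : Fin 4, kco a x y (p + Pi.single 3 c) α' = kco a x y p α' := by
    intro α'; simp only [kco, g_shift]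
  have hck : ∀ β' l : Fin 4, covDk a x y β' l (p + Pi.single 3 c) = covDk a x y β' l p := by
    intro β' l; simp only [covDk, Chr_shift, pd_const]
  simp only [ADform, hcd, htr, hk, hck, gInv_shift, Fin.sum_univ_four]
  ring

lemma ADformUp_shift {ε : ℝ} (hε : ε = 1 ∨ ε = -1) (h : Pt → Matrix (Fin 4) (Fin 4) ℝ)
    (hh : ∀ q i j, h (q + Pi.single 3 c) i j = ε * h q i j) (x y : ℝ) (α β : Fin 4) (p : Pt) :
    ADformUp a h x y α β (p + Pi.single 3 c) = ε * ADformUp a h x y α β p := by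
  have hAD : ∀ α' β' : Fin 4,
      ADform a h x y α' β' (p + Pi.single 3 c) = ε * ADform a h x y α' β' p :=
    fun α' β' => ADform_shift a c hε h hh x y α' β' p
  simp only [ADformUp, gInv_shift, hAD, Fin.sum_univ_four]
  ring

lemma vec_shift (t r z φ : ℝ) :
    (![t, r, z, φ + c] : Pt) = ![t, r, z, φ] + Pi.single 3 c := by
  funext i
  fin_cases i <;> simp [Pi.single_apply]

end ShiftLemmas

section Fourier

lemma fourier_shift (m : ℤ) (hm : m ≠ 0) (ω : ℝ) (ψ : ℝ → ℝ → ℂ) (q : Pt) :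
    fourierMode m ω ψ (q + Pi.single 3 (Real.pi / (m : ℝ)))
      = ((-1 : ℝ) : ℂ) * fourierMode m ω ψ q := by
  have hm' : (m : ℂ) ≠ 0 := Int.cast_ne_zero.mpr hm
  simp only [fourierMode, sh0, sh1, sh2, sh3]
  have hmul : (m : ℂ) * ((Real.pi : ℂ) / (m : ℂ)) = (Real.pi : ℂ) :=
    mul_div_cancel₀ _ hm'
  have key : Complex.I * ((m : ℂ) * ((q 3 + Real.pi / (m : ℝ) : ℝ) : ℂ) - (ω : ℂ) * ((q 0 : ℝ) : ℂ))
      = Complex.I * ((m : ℂ) * ((q 3 : ℝ) : ℂ) - (ω : ℂ) * ((q 0 : ℝ) : ℂ))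
        + (Real.pi : ℂ) * Complex.I := by
    push_cast
    linear_combination Complex.I * hmul
  rw [key, Complex.exp_add, Complex.exp_pi_mul_I]
  push_cast
  ring

lemma fourier_per (m : ℤ) (ω : ℝ) (ψ : ℝ → ℝ → ℂ) (q : Pt) :
    fourierMode m ω ψ (q + Pi.single 3 (2 * Real.pi))
      = ((1 : ℝ) : ℂ) * fourierMode m ω ψ q := by
  simp only [fourierMode, sh0, sh1, sh2, sh3]
  have key : Complex.I * ((m : ℂ) * ((q 3 + 2 * Real.pi : ℝ) : ℂ) - (ω : ℂ) * ((q 0 : ℝ) : ℂ))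
      = Complex.I * ((m : ℂ) * ((q 3 : ℝ) : ℂ) - (ω : ℂ) * ((q 0 : ℝ) : ℂ))
        + (m : ℂ) * (2 * (Real.pi : ℂ) * Complex.I) := by
    push_cast
    ring
  rw [key, Complex.exp_add, Complex.exp_int_mul_two_pi_mul_I]
  push_cast
  ring

lemma integral_zero_of_antiper (F : ℝ → ℝ) (T : ℝ)
    (h1 : ∀ φ, F (φ + T) = -F φ)
    (h2 : Function.Periodic F (2 * Real.pi)) :
    (∫ φ in (0 : ℝ)..(2 * Real.pi), F φ) = 0 := by
  have e1 : (∫ φ in (0 : ℝ)..(2 * Real.pi), F φ)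
      = ∫ φ in (0 : ℝ)..(2 * Real.pi), -F (φ + T) :=
    intervalIntegral.integral_congr (fun φ _ => by rw [h1, neg_neg])
  have e2 : (∫ φ in (0 : ℝ)..(2 * Real.pi), -F (φ + T))
      = -∫ φ in (0 : ℝ)..(2 * Real.pi), F (φ + T) := intervalIntegral.integral_neg
  have e3 : (∫ φ in (0 : ℝ)..(2 * Real.pi), F (φ + T))
      = ∫ φ in ((0 : ℝ) + T)..(2 * Real.pi + T), F φ :=
    intervalIntegral.integral_comp_add_right F T
  have e4 : (∫ φ in ((0 : ℝ) + T)..(2 * Real.pi + T), F φ)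
      = ∫ φ in (0 : ℝ)..(2 * Real.pi), F φ := by
    have h' := h2.intervalIntegral_add_eq T 0
    rw [zero_add] at h'
    rw [zero_add, add_comm (2 * Real.pi) T]
    exact h'
  have : (∫ φ in (0 : ℝ)..(2 * Real.pi), F φ)
      = -(∫ φ in (0 : ℝ)..(2 * Real.pi), F φ) :=
    e1.trans (e2.trans (congrArg Neg.neg (e3.trans e4)))
  linarith

end Fourier


/-- **Non-axisymmetric case of the main lemma.**  For a Fourier-mode Hertz potential with
azimuthal number `m ≠ 0` solving the homogeneous spin-`s` Teukolsky equation on the Kerr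
exterior, all Abbott–Deser charges of the corresponding CCK metric perturbation vanish. -/
theorem main_lemma_nonaxisymmetric (a : ℝ) (ha : |a| < 1) (s : ℤ) (hs : s = 2 ∨ s = -2)
    (m : ℤ) (hm : m ≠ 0) (ω : ℝ) (ψ : ℝ → ℝ → ℂ)
    (hψ : ContDiffOn ℝ (⊤ : ℕ∞) (fun q : ℝ × ℝ => ψ q.1 q.2) (U2cl a))
    (hteuk : ∀ p ∈ ext a, Teuk a s (fourierMode m ω ψ) p = 0) :
    ∀ x y t r : ℝ, rplus a < r →
      ADcharge a (hCCK a s (fourierMode m ω ψ)) x y t r = 0 := by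
  intro x y t r hr
  have hεn : (-1 : ℝ) = 1 ∨ (-1 : ℝ) = -1 := Or.inr rfl
  have hεp : (1 : ℝ) = 1 ∨ (1 : ℝ) = -1 := Or.inl rfl
  have hhn : ∀ (q : Pt) (i j : Fin 4),
      hCCK a s (fourierMode m ω ψ) (q + Pi.single 3 (Real.pi / (m : ℝ))) i j
        = (-1 : ℝ) * hCCK a s (fourierMode m ω ψ) q i j :=
    hCCK_shift a (Real.pi / (m : ℝ)) s hεn _ (fourier_shift m hm ω ψ)
  have hhp : ∀ (q : Pt) (i j : Fin 4),
      hCCK a s (fourierMode m ω ψ) (q + Pi.single 3 (2 * Real.pi)) i j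
        = (1 : ℝ) * hCCK a s (fourierMode m ω ψ) q i j :=
    hCCK_shift a (2 * Real.pi) s hεp _ (fourier_per m ω ψ)
  have hADn : ∀ p : Pt,
      ADformUp a (hCCK a s (fourierMode m ω ψ)) x y 1 0 (p + Pi.single 3 (Real.pi / (m : ℝ)))
        = (-1 : ℝ) * ADformUp a (hCCK a s (fourierMode m ω ψ)) x y 1 0 p :=
    fun p => ADformUp_shift a (Real.pi / (m : ℝ)) hεn _ hhn x y 1 0 p
  have hADp : ∀ p : Pt,
      ADformUp a (hCCK a s (fourierMode m ω ψ)) x y 1 0 (p + Pi.single 3 (2 * Real.pi))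
        = (1 : ℝ) * ADformUp a (hCCK a s (fourierMode m ω ψ)) x y 1 0 p :=
    fun p => ADformUp_shift a (2 * Real.pi) hεp _ hhp x y 1 0 p
  unfold ADcharge
  refine integral_zero_of_antiper _ (Real.pi / (m : ℝ)) ?_ ?_
  · intro φ
    have hc : (fun z : ℝ => Sig a r z *
          ADformUp a (hCCK a s (fourierMode m ω ψ)) x y 1 0 ![t, r, z, φ + Real.pi / (m : ℝ)])
        = fun z : ℝ => -(Sig a r z *
          ADformUp a (hCCK a s (fourierMode m ω ψ)) x y 1 0 ![t, r, z, φ]) := by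
      funext z
      rw [vec_shift, hADn]
      ring
    show (∫ z in (-1 : ℝ)..(1 : ℝ), Sig a r z *
        ADformUp a (hCCK a s (fourierMode m ω ψ)) x y 1 0 ![t, r, z, φ + Real.pi / (m : ℝ)])
      = -∫ z in (-1 : ℝ)..(1 : ℝ), Sig a r z *
        ADformUp a (hCCK a s (fourierMode m ω ψ)) x y 1 0 ![t, r, z, φ]
    rw [hc, intervalIntegral.integral_neg]
  · intro φ
    have hc : (fun z : ℝ => Sig a r z *
          ADformUp a (hCCK a s (fourierMode m ω ψ)) x y 1 0 ![t, r, z, φ + 2 * Real.pi])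
        = fun z : ℝ => Sig a r z *
          ADformUp a (hCCK a s (fourierMode m ω ψ)) x y 1 0 ![t, r, z, φ] := by
      funext z
      rw [vec_shift, hADp]
      ring
    show (∫ z in (-1 : ℝ)..(1 : ℝ), Sig a r z *
        ADformUp a (hCCK a s (fourierMode m ω ψ)) x y 1 0 ![t, r, z, φ + 2 * Real.pi])
      = ∫ z in (-1 : ℝ)..(1 : ℝ), Sig a r z *
        ADformUp a (hCCK a s (fourierMode m ω ψ)) x y 1 0 ![t, r, z, φ]
    rw [hc]

end Kerr
end
end

section
/- Verification of the stationary axisymmetric kernel solutions: For every c = (c₁,…,c₈) ∈ ℂ⁸, the function Φ_Ker(c) satisfies ∂_r⁴ Φ_Ker(c) = 0 and 𝒯₋₂ Φ_Ker(c) = 0 at every point of U = {(r,z) : r > r₊, −1 < z < 1}. -/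
noncomputable section

open ComplexConjugate Filter

/-!
For fixed `z`, `Φ_Ker(c)` is a cubic polynomial in `r`, whence `∂_r⁴ Φ_Ker(c) = 0`.
Write `Φ_Ker(c) = N / (1 - z²)`. The radial part of `𝒯₋₂` turns `N` into
`(Δ N_rr - Δ' N_r) / (1 - z²)`, and for `s = -2` the potential term cancels exactly the
singular terms of the angular part, which leaves `N_zz + 2z N_z / (1 - z²)`. Hence
`(1 - z²) 𝒯₋₂ Φ_Ker(c) = Δ N_rr - Δ' N_r + (1 - z²) N_zz + 2z N_z`, a polynomial in `r`, `z`,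
`a`, `c` that vanishes identically.
-/

section PolynomialOfReal

open Polynomial

theorem hasDerivAt_eval_ofReal (p : ℂ[X]) (x : ℝ) :
    HasDerivAt (fun t : ℝ => p.eval (t : ℂ)) (p.derivative.eval (x : ℂ)) x :=
  (p.hasDerivAt (x : ℂ)).comp_ofReal

theorem deriv_eval_ofReal (p : ℂ[X]) :
    deriv (fun t : ℝ => p.eval (t : ℂ)) = fun t : ℝ => p.derivative.eval (t : ℂ) :=
  funext fun x => (hasDerivAt_eval_ofReal p x).deriv

theorem iterate_deriv_eval_ofReal (p : ℂ[X]) (n : ℕ) :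
    deriv^[n] (fun t : ℝ => p.eval (t : ℂ)) = fun t : ℝ => (derivative^[n] p).eval (t : ℂ) := by
  induction n with
  | zero => rfl
  | succ n ih =>
    rw [Function.iterate_succ_apply', ih, deriv_eval_ofReal, Function.iterate_succ_apply']

theorem hasDerivAt_eval_div_eval_ofReal (p q : ℂ[X]) {x : ℝ} (hq : q.eval (x : ℂ) ≠ 0) :
    HasDerivAt (fun t : ℝ => p.eval (t : ℂ) / q.eval (t : ℂ))
      ((p.derivative.eval (x : ℂ) * q.eval (x : ℂ) - p.eval (x : ℂ) * q.derivative.eval (x : ℂ))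
        / q.eval (x : ℂ) ^ 2) x :=
  (hasDerivAt_eval_ofReal p x).div (hasDerivAt_eval_ofReal q x) hq

end PolynomialOfReal

namespace Kerr

open Polynomial Set

theorem Del_pos {a r : ℝ} (hr : rplus a < r) : 0 < Del a r := by
  have hs := Real.sqrt_nonneg (1 - a ^ 2)
  unfold rplus at hr
  have h : 1 - a ^ 2 < (r - 1) ^ 2 := (Real.sqrt_lt' (by linarith)).1 (by linarith)
  unfold Del
  nlinarith

theorem hasDerivAt_Del (a r : ℝ) : HasDerivAt (fun t : ℝ => (Del a t : ℂ)) (2 * r - 2) r :=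
  (((hasDerivAt_id r).mul ((hasDerivAt_id r).sub_const 2)).add_const (a ^ 2)).ofReal_comp
    |>.congr_deriv (by push_cast [id]; ring)

theorem one_sub_sq_ne_zero {z : ℝ} (hz : z ∈ Ioo (-1 : ℝ) 1) : (1 - (z : ℂ) ^ 2) ≠ 0 := by
  have : (0 : ℝ) < 1 - z ^ 2 := by nlinarith [hz.1, hz.2]
  exact_mod_cast this.ne'

def teukRadial (a : ℝ) (s : ℤ) (f : ℝ → ℂ) (r : ℝ) : ℂ :=
  (Del a r : ℂ) ^ (-s) * deriv (fun r' => (Del a r' : ℂ) ^ (s + 1) * deriv f r') r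

def teukAngular (s : ℤ) (g : ℝ → ℂ) (z : ℝ) : ℂ :=
  deriv (fun z' => ((1 - z' ^ 2 : ℝ) : ℂ) * deriv g z') z
    - ((s : ℂ) * ((s : ℂ) + 1) * (z : ℂ) ^ 2 - (s : ℂ)) / (1 - (z : ℂ) ^ 2) * g z

theorem TeukSAS_eq_teukRadial_add_teukAngular (a : ℝ) (s : ℤ) (ψ : ℝ → ℝ → ℂ) (r z : ℝ) :
    TeukSAS a s ψ r z = teukRadial a s (fun r' => ψ r' z) r + teukAngular s (ψ r) z :=
  add_sub_assoc _ _ _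

theorem teukRadial_eval_ofReal (a : ℝ) (s : ℤ) (p : ℂ[X]) {r : ℝ} (hΔ : Del a r ≠ 0) :
    teukRadial a s (fun t : ℝ => p.eval (t : ℂ)) r
      = Del a r * p.derivative.derivative.eval (r : ℂ)
        + (s + 1) * (2 * r - 2) * p.derivative.eval (r : ℂ) := by
  have hΔ' : (Del a r : ℂ) ≠ 0 := Complex.ofReal_ne_zero.2 hΔ
  have h : HasDerivAt (fun r' => (Del a r' : ℂ) ^ (s + 1) * p.derivative.eval (r' : ℂ)) _ r :=
    ((hasDerivAt_zpow (s + 1) _ (Or.inl hΔ')).comp r (hasDerivAt_Del a r)).mul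
      (hasDerivAt_eval_ofReal p.derivative r)
  rw [teukRadial, deriv_eval_ofReal, h.deriv]
  simp only [Function.comp_def, add_sub_cancel_right, zpow_add_one₀ hΔ', zpow_neg]
  field_simp [zpow_ne_zero s hΔ']
  push_cast
  ring

theorem teukAngular_inv_mul_eval_ofReal (s : ℤ) (m : ℂ[X]) {z : ℝ} (hz : z ∈ Ioo (-1 : ℝ) 1) :
    teukAngular s (fun t : ℝ => (1 - (t : ℂ) ^ 2)⁻¹ * m.eval (t : ℂ)) z
      = m.derivative.derivative.eval (z : ℂ)
        + 2 * z * m.derivative.eval (z : ℂ) / (1 - (z : ℂ) ^ 2)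
        + (s + 2) * (1 - (s - 1) * z ^ 2) * m.eval (z : ℂ) / (1 - (z : ℂ) ^ 2) ^ 2 := by
  have hW : ∀ t : ℝ, (1 - X ^ 2 : ℂ[X]).eval (t : ℂ) = 1 - (t : ℂ) ^ 2 := by simp
  have hW' : ∀ t : ℝ, (derivative (1 - X ^ 2 : ℂ[X])).eval (t : ℂ) = -2 * t := by
    simp [one_add_one_eq_two]
  have hquot : (fun t : ℝ => (1 - (t : ℂ) ^ 2)⁻¹ * m.eval (t : ℂ))
      = fun t : ℝ => m.eval (t : ℂ) / (1 - X ^ 2 : ℂ[X]).eval (t : ℂ) := by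
    funext t; rw [hW, inv_mul_eq_div]
  have hflux : (fun z' => ((1 - z' ^ 2 : ℝ) : ℂ) *
        deriv (fun t : ℝ => (1 - (t : ℂ) ^ 2)⁻¹ * m.eval (t : ℂ)) z')
      =ᶠ[nhds z] fun t : ℝ => (m.derivative * (1 - X ^ 2) + 2 * X * m).eval (t : ℂ)
        / (1 - X ^ 2 : ℂ[X]).eval (t : ℂ) := by
    filter_upwards [Ioo_mem_nhds hz.1 hz.2] with t ht
    have hw := one_sub_sq_ne_zero ht
    rw [hquot, (hasDerivAt_eval_div_eval_ofReal m _ ((hW t).symm ▸ hw)).deriv]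
    simp only [eval_add, eval_mul, eval_X, eval_ofNat, hW, hW']
    push_cast
    field_simp
    ring
  have hw := one_sub_sq_ne_zero hz
  rw [teukAngular, hflux.deriv_eq, (hasDerivAt_eval_div_eval_ofReal _ _ ((hW z).symm ▸ hw)).deriv]
  simp only [derivative_add, derivative_mul, derivative_X, derivative_ofNat, eval_add, eval_mul,
    eval_X, eval_ofNat, eval_zero, eval_one, hW, hW']
  field_simp
  ring

-- Over an arbitrary commutative ring, so that the numerator can be read as a polynomial in `r`
-- or in `z`.
def PhiKerNum {R : Type*} [CommRing R] (a : R) (c : Fin 8 → R) (r z : R) : R :=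
  c 0
    + c 1 * (r - 1) * z
    + c 2 * z * (z ^ 2 - 3)
    + c 3 * (r + (r - 1) * z ^ 2)
    + c 4 * (r ^ 2 - a ^ 2) * z
    + c 5 * r * (r * (r - 3) + 3 * a ^ 2)
    + c 6 * (r ^ 2 + (r ^ 2 - a ^ 2) * z ^ 2)
    + c 7 * r * z * ((r * (r - 3) + 3 * a ^ 2) * z ^ 2 - 3 * (r * (r + 4) - 4 * a ^ 2))

theorem PhiKer_eq_eval_radial (a : ℝ) (c : Fin 8 → ℂ) (z : ℝ) :
    (fun r : ℝ => PhiKer a c r z) = fun r : ℝ =>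
      (C (1 - (z : ℂ) ^ 2)⁻¹ * PhiKerNum (C (a : ℂ)) (fun i => C (c i)) X (C (z : ℂ))).eval
        (r : ℂ) := by
  funext r
  simp [PhiKer, PhiKerNum]

theorem PhiKer_eq_eval_angular (a : ℝ) (c : Fin 8 → ℂ) (r : ℝ) :
    PhiKer a c r = fun z : ℝ =>
      (1 - (z : ℂ) ^ 2)⁻¹ * (PhiKerNum (C (a : ℂ)) (fun i => C (c i)) (C (r : ℂ)) X).eval (z : ℂ) := by
  funext z
  simp [PhiKer, PhiKerNum]

theorem natDegree_PhiKerNum_le (a z : ℂ) (c : Fin 8 → ℂ) :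
    (PhiKerNum (C a) (fun i => C (c i)) X (C z)).natDegree ≤ 3 := by
  unfold PhiKerNum
  compute_degree

theorem PhiKerNum_reduced_eq_zero (a : ℂ) (c : Fin 8 → ℂ) (r z : ℂ) :
    (r * (r - 2) + a ^ 2)
        * (derivative (derivative (PhiKerNum (C a) (fun i => C (c i)) X (C z)))).eval r
      - (2 * r - 2) * (derivative (PhiKerNum (C a) (fun i => C (c i)) X (C z))).eval r
      + (1 - z ^ 2) * (derivative (derivative (PhiKerNum (C a) (fun i => C (c i)) (C r) X))).eval z
      + 2 * z * (derivative (PhiKerNum (C a) (fun i => C (c i)) (C r) X)).eval z = 0 := by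
  simp only [PhiKerNum, derivative_add, derivative_sub, derivative_mul, derivative_pow,
    derivative_C, derivative_X, derivative_one, derivative_ofNat, eval_add, eval_sub, eval_mul,
    eval_pow, eval_C, eval_X, eval_one, eval_ofNat, zero_mul, mul_zero, add_zero, zero_add, sub_zero,
    Nat.cast_ofNat]
  ring

theorem PhiKer_solves_general (a : ℝ) (c : Fin 8 → ℂ) :
    ∀ q ∈ U2 a,
      deriv^[4] (fun r' => PhiKer a c r' q.2) q.1 = 0 ∧
      TeukSAS a (-2) (PhiKer a c) q.1 q.2 = 0 := by
  rintro ⟨r, z⟩ ⟨hr, hz₁, hz₂⟩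
  dsimp only at hr hz₁ hz₂ ⊢
  have hz : z ∈ Ioo (-1 : ℝ) 1 := ⟨hz₁, hz₂⟩
  refine ⟨?_, ?_⟩
  · rw [PhiKer_eq_eval_radial, iterate_deriv_eval_ofReal, iterate_derivative_eq_zero]
    exacts [eval_zero,
      (natDegree_C_mul_le _ _).trans_lt (Nat.lt_succ_of_le (natDegree_PhiKerNum_le _ _ _))]
  · rw [TeukSAS_eq_teukRadial_add_teukAngular, PhiKer_eq_eval_radial,
      teukRadial_eval_ofReal a _ _ (Del_pos hr).ne', PhiKer_eq_eval_angular,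
      teukAngular_inv_mul_eval_ofReal _ _ hz]
    have hw := one_sub_sq_ne_zero hz
    simp only [derivative_C_mul, eval_mul, eval_C]
    push_cast [Del]
    field_simp
    linear_combination (1 - (z : ℂ) ^ 2) * PhiKerNum_reduced_eq_zero a c r z

/-- **Verification of the stationary axisymmetric kernel solutions.**  For every
`c ∈ ℂ⁸` the function `Φ_Ker(c)` satisfies `∂_r⁴ Φ_Ker(c) = 0` and `𝒯₋₂ Φ_Ker(c) = 0`
at every point of `U = {(r,z) : r > r₊, −1 < z < 1}`. -/
theorem PhiKer_solves (a : ℝ) (ha : |a| < 1) (c : Fin 8 → ℂ) :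
    ∀ q ∈ U2 a,
      deriv^[4] (fun r' => PhiKer a c r' q.2) q.1 = 0 ∧
      TeukSAS a (-2) (PhiKer a c) q.1 q.2 = 0 :=
  PhiKer_solves_general a c

end Kerr
end
end
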